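/- Suppose a recurrence S(n) = O(n log n) + 2·√(n/log² n) · S(√(n·log² n)) holds for a space function S measured in bits, with base case S(m) = O(m log log m) for m ≤ polylog(n). Then S(n) = O(n log log n). -/

import Mathlib

/-!
Induct on `n` with the bound `S n ≤ C·n·L·G`, where `L = log₂ n` and `G = log₂ L`.
A slab has `m ≈ √n·L` points, so `log₂ m ≤ L/2 + G + 1 ≤ L/√2` for large `n`, and hence
`log₂ log₂ m ≤ G - 1/2`. The `≈ √n/L` slabs, each of cost at most `C·m·log₂ m·log₂ log₂ m`,
therefore cost in total about `2·C·n·(L/2)·(G - 1/2) = C·n·L·G - C·n·L/2` up to lower-order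
terms: the saving `C·n·L/2` pays for the top level `A·n·L` once `C ≥ 10·A`.
The finitely many small `n` are absorbed into `C`.
-/

open Real

/-- Number of slabs at each recursion level: `2·⌈√(n / log₂² n)⌉`. -/
noncomputable def slabCount (n : ℕ) : ℕ := ⌈Real.sqrt (n / (Real.logb 2 n) ^ 2)⌉₊

/-- Size of each slab: `⌈√(n · log₂² n)⌉`. -/
noncomputable def slabSize (n : ℕ) : ℕ := ⌈Real.sqrt (n * (Real.logb 2 n) ^ 2)⌉₊

open Filter Asymptotics

theorem eventually_logb_pow_le {b : ℝ} (hb : 1 < b) (k : ℕ) {c : ℝ} (hc : 0 < c) :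
    ∀ᶠ x in atTop, logb b x ^ k ≤ c * x := by
  have hlogb : 0 < log b := log_pos hb
  filter_upwards [isLittleO_pow_log_id_atTop.def (mul_pos hc (pow_pos hlogb k)),
    eventually_ge_atTop 0] with x hx hx0
  rw [Real.norm_eq_abs, id, Real.norm_of_nonneg hx0] at hx
  rw [logb, div_pow, div_le_iff₀ (pow_pos hlogb k)]
  linarith [le_abs_self (log x ^ k)]

theorem eventually_logb_sq_le_sqrt {b : ℝ} (hb : 1 < b) {c : ℝ} (hc : 0 < c) :
    ∀ᶠ x in atTop, logb b x ^ 2 ≤ c * √x := by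
  filter_upwards [tendsto_sqrt_atTop.eventually
      (eventually_logb_pow_le hb 2 (by positivity : 0 < c / 4)), eventually_ge_atTop 0]
    with x hx hx0
  have hsqrt : logb b √x = logb b x / 2 := by simp only [logb, log_sqrt hx0]; ring
  rw [hsqrt] at hx
  linarith

theorem one_le_logb_of_le {b y : ℝ} (hb : 1 < b) (hy : b ≤ y) : 1 ≤ logb b y :=
  (le_logb_iff_rpow_le hb (by linarith)).2 (by simpa using hy)

theorem one_le_mul_logb_mul_logb_logb {x : ℝ} (hx : 4 ≤ x) :
    1 ≤ x * logb 2 x * logb 2 (logb 2 x) := by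
  have hL : 2 ≤ logb 2 x :=
    (le_logb_iff_rpow_le one_lt_two (by linarith)).2 (by norm_num; linarith)
  have hG := one_le_logb_of_le one_lt_two hL
  nlinarith [mul_le_mul hx hL (by norm_num) (by linarith)]

/-- Largeness conditions on `x` under which the inductive step goes through. -/
structure SlabRegime (x : ℝ) : Prop where
  one_le_logb_logb : 1 ≤ logb 2 (logb 2 x)
  logb_logb_sq_le : 2 * logb 2 (logb 2 x) ^ 2 + logb 2 (logb 2 x) ≤ logb 2 x / 5
  logb_mul_logb_logb_le : 30 * logb 2 x * logb 2 (logb 2 x) ≤ √x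

namespace SlabRegime

variable {x : ℝ} (hx : SlabRegime x)
include hx

theorem one_add_logb_logb_le : 1 + logb 2 (logb 2 x) ≤ logb 2 x / 5 := by
  nlinarith [hx.one_le_logb_logb, hx.logb_logb_sq_le]

theorem ten_le_logb : 10 ≤ logb 2 x := by
  linarith [hx.one_le_logb_logb, hx.one_add_logb_logb_le]

theorem thirty_mul_logb_le_sqrt : 30 * logb 2 x ≤ √x := by
  nlinarith [hx.one_le_logb_logb, hx.logb_mul_logb_logb_le, hx.ten_le_logb]

theorem pos : 0 < x := by
  by_contra! h
  have ht := hx.thirty_mul_logb_le_sqrt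
  rw [sqrt_eq_zero_of_nonpos h] at ht
  linarith [hx.ten_le_logb]

theorem sqrt_mul_logb_add_one_lt : √x * logb 2 x + 1 < x := by
  have hL := hx.ten_le_logb
  have ht := hx.thirty_mul_logb_le_sqrt
  nlinarith [sq_sqrt hx.pos.le]

theorem four_le_sqrt_mul_logb : 4 ≤ √x * logb 2 x := by
  nlinarith [hx.ten_le_logb, hx.thirty_mul_logb_le_sqrt]

theorem logb_le_of_le_sqrt_mul_logb_add_one {m : ℝ} (hm0 : 0 < m)
    (hm : m ≤ √x * logb 2 x + 1) :
    logb 2 m ≤ 1 + logb 2 x / 2 + logb 2 (logb 2 x) := by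
  have hL := hx.ten_le_logb
  have ht := hx.thirty_mul_logb_le_sqrt
  have hx0 := hx.pos
  calc logb 2 m ≤ logb 2 (2 * (√x * logb 2 x)) :=
        logb_le_logb_of_le one_lt_two hm0 (by nlinarith)
    _ = 1 + logb 2 x / 2 + logb 2 (logb 2 x) := by
        rw [logb_mul two_ne_zero (by positivity), logb_mul (by positivity) (by positivity),
          logb_self_eq_one one_lt_two]
        simp only [logb, log_sqrt hx0.le]
        ring

theorem logb_logb_le_of_logb_le {l : ℝ} (hl : 0 < l)
    (h : l ≤ 1 + logb 2 x / 2 + logb 2 (logb 2 x)) :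
    logb 2 l ≤ logb 2 (logb 2 x) - 1 / 2 := by
  have hL := hx.ten_le_logb
  -- `l ≤ 0.7·L < L/√2`, i.e. `2·l² ≤ L²`
  have hl7 : l ≤ 7 / 10 * logb 2 x := by linarith [hx.one_add_logb_logb_le]
  have hsq : 2 * l ^ 2 ≤ logb 2 x ^ 2 := by nlinarith
  have hmono := logb_le_logb_of_le one_lt_two (by positivity) hsq
  rw [logb_mul two_ne_zero (by positivity), logb_self_eq_one one_lt_two, logb_pow,
    logb_pow] at hmono
  push_cast at hmono
  linarith

theorem slab_product_le :
    2 * ((√x / logb 2 x + 1) * (√x * logb 2 x + 1)) *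
        ((1 + logb 2 x / 2 + logb 2 (logb 2 x)) * (logb 2 (logb 2 x) - 1 / 2)) ≤
      x * logb 2 x * logb 2 (logb 2 x) - x * logb 2 x / 10 := by
  have hL := hx.ten_le_logb
  have hG := hx.one_le_logb_logb
  have hGL := hx.logb_logb_sq_le
  have hLGt := hx.logb_mul_logb_logb_le
  have htL := hx.thirty_mul_logb_le_sqrt
  have hxt : x = √x ^ 2 := (sq_sqrt hx.pos.le).symm
  set L := logb 2 x
  set G := logb 2 (logb 2 x)
  set t := √x
  have hP0 : 0 ≤ (1 + L / 2 + G) * (G - 1 / 2) := by nlinarith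
  have hPLG : (1 + L / 2 + G) * (G - 1 / 2) ≤ L * G := by nlinarith [hx.one_add_logb_logb_le]
  have hpair : (t / L + 1) * (t * L + 1) ≤ x + 3 * (t * L) := by
    have hdiv : t / L ≤ t * L := by
      rw [div_le_iff₀ (by positivity)]
      nlinarith [mul_le_mul_of_nonneg_left (show 1 ≤ L * L by nlinarith) (sqrt_nonneg x)]
    have hsq : t / L * (t * L) = x := by rw [hxt]; field_simp [show L ≠ 0 by positivity]
    nlinarith
  set P := (1 + L / 2 + G) * (G - 1 / 2)
  have hx0 : 0 ≤ x := hx.pos.le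
  have h1 : 2 * ((t / L + 1) * (t * L + 1)) * P ≤ 2 * (x + 3 * (t * L)) * P := by gcongr
  have h2 : x * (2 * G ^ 2 + G - 1) ≤ x * (L / 5) := by gcongr; linarith
  have h3 : 6 * (t * L) * P ≤ x * L / 5 := by
    have hLG : 6 * (t * L) * (L * G) ≤ t * L * (t / 5) := by
      rw [show 6 * (t * L) * (L * G) = t * L * (6 * L * G) by ring]
      gcongr; linarith
    have hP : 6 * (t * L) * P ≤ 6 * (t * L) * (L * G) := by gcongr
    rw [hxt]; nlinarith
  have hexpand : 2 * (x + 3 * (t * L)) * P =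
      x * L * G - x * L / 2 + x * (2 * G ^ 2 + G - 1) + 6 * (t * L) * P := by ring
  linarith

theorem le_of_recurrence {A C m K Sm Sn : ℝ} (hC : 0 ≤ C) (hCA : 10 * A ≤ C)
    (hm_lb : √x * logb 2 x ≤ m) (hm_ub : m ≤ √x * logb 2 x + 1)
    (hK : K ≤ √x / logb 2 x + 1)
    (hSm0 : 0 ≤ Sm) (hSm : Sm ≤ C * m * logb 2 m * logb 2 (logb 2 m))
    (hSn : Sn ≤ A * x * logb 2 x + 2 * K * Sm) :
    Sn ≤ C * x * logb 2 x * logb 2 (logb 2 x) := by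
  have hL := hx.ten_le_logb
  have hm2 : 2 ≤ m := by linarith [hx.four_le_sqrt_mul_logb]
  have hlm1 := one_le_logb_of_le one_lt_two hm2
  have hlm := hx.logb_le_of_le_sqrt_mul_logb_add_one (by linarith) hm_ub
  have hllm := hx.logb_logb_le_of_logb_le (by linarith) hlm
  have hllm0 : 0 ≤ logb 2 (logb 2 m) := logb_nonneg one_lt_two hlm1
  have hSm' : Sm ≤ C * ((√x * logb 2 x + 1) *
      ((1 + logb 2 x / 2 + logb 2 (logb 2 x)) * (logb 2 (logb 2 x) - 1 / 2))) := by
    calc Sm ≤ C * m * logb 2 m * logb 2 (logb 2 m) := hSm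
      _ ≤ C * (√x * logb 2 x + 1) * (1 + logb 2 x / 2 + logb 2 (logb 2 x)) *
          (logb 2 (logb 2 x) - 1 / 2) := by
        have hG := hx.one_le_logb_logb
        gcongr
      _ = _ := by ring
  have hKSm : K * Sm ≤ (√x / logb 2 x + 1) * (C * ((√x * logb 2 x + 1) *
      ((1 + logb 2 x / 2 + logb 2 (logb 2 x)) * (logb 2 (logb 2 x) - 1 / 2)))) := by
    gcongr
  have hAC : A * x * logb 2 x ≤ C / 10 * x * logb 2 x := by
    have hx0 := hx.pos
    gcongr
    linarith
  linarith [mul_le_mul_of_nonneg_left hx.slab_product_le hC]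

end SlabRegime

theorem eventually_slabRegime : ∀ᶠ x in atTop, SlabRegime x := by
  have hL : Tendsto (logb 2) atTop atTop := tendsto_logb_atTop one_lt_two
  have hG : ∀ᶠ u in atTop, 2 * logb 2 u ^ 2 + logb 2 u ≤ u / 5 := by
    filter_upwards [eventually_logb_pow_le one_lt_two 2 (by norm_num : (0:ℝ) < 1 / 20),
      eventually_logb_pow_le one_lt_two 1 (by norm_num : (0:ℝ) < 1 / 10)] with u h2 h1
    linarith [pow_one (logb 2 u)]
  filter_upwards [hL.eventually (eventually_ge_atTop 2), hL.eventually hG,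
    eventually_logb_sq_le_sqrt one_lt_two (by norm_num : (0:ℝ) < 1 / 6)] with x hL2 hGL hsq
  have hG1 := one_le_logb_of_le one_lt_two hL2
  refine ⟨hG1, hGL, ?_⟩
  have hGL' : logb 2 (logb 2 x) ≤ logb 2 x / 5 := by nlinarith
  nlinarith [mul_le_mul_of_nonneg_left hGL' (by linarith : (0:ℝ) ≤ 30 * logb 2 x)]

theorem logb_natCast_nonneg {b : ℝ} (hb : 1 ≤ b) (n : ℕ) : 0 ≤ logb b n :=
  div_nonneg (log_natCast_nonneg n) (log_nonneg hb)

theorem sqrt_mul_logb_le_slabSize (n : ℕ) : √n * logb 2 n ≤ slabSize n := by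
  rw [slabSize, sqrt_mul (Nat.cast_nonneg n), sqrt_sq (logb_natCast_nonneg one_le_two n)]
  exact Nat.le_ceil _

theorem slabSize_le (n : ℕ) : (slabSize n : ℝ) ≤ √n * logb 2 n + 1 := by
  rw [slabSize, sqrt_mul (Nat.cast_nonneg n), sqrt_sq (logb_natCast_nonneg one_le_two n)]
  exact (Nat.ceil_lt_add_one (mul_nonneg (sqrt_nonneg _) (logb_natCast_nonneg one_le_two n))).le

theorem slabCount_le (n : ℕ) : (slabCount n : ℝ) ≤ √n / logb 2 n + 1 := by
  rw [slabCount, sqrt_div (Nat.cast_nonneg n), sqrt_sq (logb_natCast_nonneg one_le_two n)]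
  exact (Nat.ceil_lt_add_one (div_nonneg (sqrt_nonneg _) (logb_natCast_nonneg one_le_two n))).le

theorem SlabRegime.slabSize_lt {n : ℕ} (hn : SlabRegime n) : slabSize n < n := by
  exact_mod_cast (slabSize_le n).trans_lt hn.sqrt_mul_logb_add_one_lt

theorem SlabRegime.four_le_slabSize {n : ℕ} (hn : SlabRegime n) : 4 ≤ slabSize n := by
  exact_mod_cast hn.four_le_sqrt_mul_logb.trans (sqrt_mul_logb_le_slabSize n)

theorem exists_forall_le_mul_of_step {f g : ℕ → ℝ} (a N : ℕ) (C₀ : ℝ)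
    (hg : ∀ n, a ≤ n → 1 ≤ g n)
    (hstep : ∀ C, C₀ ≤ C → ∀ n, N ≤ n → (∀ m < n, a ≤ m → f m ≤ C * g m) → f n ≤ C * g n) :
    ∃ C, ∀ n, a ≤ n → f n ≤ C * g n := by
  set C := max C₀ (∑ k ∈ Finset.range N, |f k|)
  have hC0 : 0 ≤ C := le_max_of_le_right (Finset.sum_nonneg fun k _ => abs_nonneg (f k))
  refine ⟨C, fun n => ?_⟩
  induction n using Nat.strong_induction_on with
  | _ n ih =>
  intro hn
  rcases lt_or_ge n N with hnN | hNn
  · calc f n ≤ |f n| := le_abs_self _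
      _ ≤ ∑ k ∈ Finset.range N, |f k| :=
        Finset.single_le_sum (fun k _ => abs_nonneg (f k)) (Finset.mem_range.2 hnN)
      _ ≤ C := le_max_right _ _
      _ ≤ C * g n := le_mul_of_one_le_right hC0 (hg n hn)
  · exact hstep C (le_max_left _ _) n hNn ih

theorem recurrence_space_bits_general (A : ℝ) (N₀ : ℕ) (S : ℕ → NNReal)
    (hrec : ∀ n, N₀ ≤ n →
      (S n : ℝ) ≤ A * n * Real.logb 2 n + 2 * slabCount n * (S (slabSize n) : ℝ)) :
    ∃ C : ℝ, ∀ n : ℕ, 4 ≤ n →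
      (S n : ℝ) ≤ C * n * Real.logb 2 n * Real.logb 2 (Real.logb 2 n) := by
  obtain ⟨N, hN⟩ :=
    eventually_atTop.1 (tendsto_natCast_atTop_atTop.eventually eventually_slabRegime)
  refine (exists_forall_le_mul_of_step (f := fun n => (S n : ℝ))
    (g := fun n => n * logb 2 n * logb 2 (logb 2 n)) 4 (max N₀ N) (max (10 * A) 0)
    (fun n hn => one_le_mul_logb_mul_logb_logb (by exact_mod_cast hn))
    (fun C hC n hn ih => ?_)).imp fun C hC n hn => (hC n hn).trans_eq (by ring)
  have hreg : SlabRegime n := hN n (le_of_max_le_right hn)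
  have hSm := ih _ hreg.slabSize_lt hreg.four_le_slabSize
  exact (hreg.le_of_recurrence (le_of_max_le_right hC) (le_of_max_le_left hC)
    (sqrt_mul_logb_le_slabSize n) (slabSize_le n) (slabCount_le n) (S _).coe_nonneg
    (hSm.trans_eq (by ring)) (hrec n (le_of_max_le_left hn))).trans_eq (by ring)

/-- If a space bound `S` (in bits) satisfies
`S n ≤ A·n·log₂ n + 2·√(n / log₂² n) · S (√(n · log₂² n))` above a threshold
`N₀` (below which `S` obeys the base-case bound), with recursion depth
`O(log log n)`, then `S n = O(n · log n · log log n)` bits, i.e.,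
`O(n log log n)` words of `log n` bits. -/
theorem recurrence_space_bits (A : ℝ) (N₀ : ℕ) (S : ℕ → NNReal)
    (hm : ∀ n, N₀ ≤ n → slabSize n < n)
    (hrec : ∀ n, N₀ ≤ n →
      (S n : ℝ) ≤ A * n * Real.logb 2 n + 2 * slabCount n * (S (slabSize n) : ℝ))
    (hbase : ∀ n, n < N₀ → (S n : ℝ) ≤ A * n + A) :
    ∃ C : ℝ, ∀ n : ℕ, 4 ≤ n →
      (S n : ℝ) ≤ C * n * Real.logb 2 n * Real.logb 2 (Real.logb 2 n) :=
  recurrence_space_bits_general A N₀ S hrec
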